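/- arXiv:1503.02231 — 7 statements merged into one kernel-verified Lean document; each statement's English description precedes it below -/
import Mathlib

section
/- Let u : ℝⁿ → ℝ be convex. For each standard basis vector eᵢ, the set of points x at which the partial derivative ∂u/∂xᵢ fails to exist is a G_{δσ} set (a countable union of countable intersections of open sets). -/
open Set
open scoped Topology

/-!
Along the line `t ↦ x + t • eᵢ` the convex function `u` has one-sided derivatives `ℓ ≤ r`, and
`∂u/∂xᵢ` fails to exist exactly when the jump `r - ℓ` is positive. Since `r` is the infimum of the
right secant slopes and `ℓ` the supremum of the left ones, `r - ℓ ≥ 1/(j+1)` says that every right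
slope exceeds every left slope by at least `1/(j+1)`; each such slope depends continuously on `x`,
so this condition defines a closed set. The nondifferentiability set is therefore a countable union
of closed sets, and closed sets of a metric space are `G_δ`.
-/

namespace ConvexOn

variable {S : Set ℝ} {f : ℝ → ℝ} {a : ℝ}

theorem differentiableAt_iff_leftDeriv_eq_rightDeriv (hf : ConvexOn ℝ S f)
    (ha : a ∈ interior S) :
    DifferentiableAt ℝ f a ↔ derivWithin f (Iio a) a = derivWithin f (Ioi a) a := by
  refine ⟨fun hd => ?_, fun heq => ?_⟩
  · rw [hd.hasDerivAt.hasDerivWithinAt.derivWithin (uniqueDiffWithinAt_Iio a),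
      hd.hasDerivAt.hasDerivWithinAt.derivWithin (uniqueDiffWithinAt_Ioi a)]
  · have hleft := (hasDerivWithinAt_iff_tendsto_slope' self_notMem_Iio).mp
      (hf.hasDerivWithinAt_leftDeriv_of_mem_interior ha)
    have hright := (hasDerivWithinAt_iff_tendsto_slope' self_notMem_Ioi).mp
      (hf.hasDerivWithinAt_rightDeriv_of_mem_interior ha)
    rw [heq] at hleft
    exact (hasDerivAt_iff_tendsto_slope_left_right.mpr ⟨hleft, hright⟩).differentiableAt

theorem le_rightDeriv_sub_leftDeriv_iff (hf : ConvexOn ℝ S f) (ha : a ∈ interior S) {c : ℝ} :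
    c ≤ derivWithin f (Ioi a) a - derivWithin f (Iio a) a ↔
      ∀ s ∈ S, ∀ t ∈ S, s < a → a < t → c ≤ slope f a t - slope f a s := by
  have haS := interior_subset ha
  refine ⟨fun hc s hs t ht hsa hat => ?_, fun h => ?_⟩
  · have hr := hf.rightDeriv_le_slope haS ht hat (hf.differentiableWithinAt_Ioi_of_mem_interior ha)
    have hl := hf.slope_le_leftDeriv hs haS hsa (hf.differentiableWithinAt_Iio_of_mem_interior ha)
    rw [slope_comm] at hl
    linarith
  · have hS : S ∈ 𝓝 a := mem_interior_iff_mem_nhds.mp ha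
    have hright := (hasDerivWithinAt_iff_tendsto_slope' self_notMem_Ioi).mp
      (hf.hasDerivWithinAt_rightDeriv_of_mem_interior ha)
    have hleft := (hasDerivWithinAt_iff_tendsto_slope' self_notMem_Iio).mp
      (hf.hasDerivWithinAt_leftDeriv_of_mem_interior ha)
    have hslope : ∀ s ∈ S, s < a → c + slope f a s ≤ derivWithin f (Ioi a) a := fun s hs hsa =>
      ge_of_tendsto hright <| by
        filter_upwards [nhdsWithin_le_nhds hS, self_mem_nhdsWithin] with t ht hat
        linarith [h s hs t ht hsa hat]
    have : derivWithin f (Iio a) a ≤ derivWithin f (Ioi a) a - c :=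
      le_of_tendsto hleft <| by
        filter_upwards [nhdsWithin_le_nhds hS, self_mem_nhdsWithin] with s hs hsa
        linarith [hslope s hs hsa]
    linarith

theorem not_differentiableAt_iff_exists_nat (hf : ConvexOn ℝ S f) (ha : a ∈ interior S) :
    ¬ DifferentiableAt ℝ f a ↔
      ∃ j : ℕ, ∀ s ∈ S, ∀ t ∈ S, s < a → a < t → 1 / (j + 1 : ℝ) ≤ slope f a t - slope f a s := by
  simp_rw [hf.differentiableAt_iff_leftDeriv_eq_rightDeriv ha,
    ← hf.le_rightDeriv_sub_leftDeriv_iff ha]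
  have hle := hf.leftDeriv_le_rightDeriv_of_mem_interior ha
  refine ⟨fun hne => ?_, fun ⟨j, hj⟩ heq => ?_⟩
  · obtain ⟨j, hj⟩ := exists_nat_one_div_lt (sub_pos.mpr (lt_of_le_of_ne hle hne))
    exact ⟨j, hj.le⟩
  · rw [heq, sub_self] at hj
    exact (Nat.one_div_pos_of_nat.trans_le hj).false

end ConvexOn

section Line

variable {E : Type*} [AddCommGroup E] [Module ℝ E]

theorem ConvexOn.comp_line {u : E → ℝ} (hu : ConvexOn ℝ univ u) (x v : E) :
    ConvexOn ℝ univ (fun t : ℝ => u (x + t • v)) := by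
  simpa [Function.comp_def] using
    (hu.translate_right x).comp_linearMap (LinearMap.toSpanSingleton ℝ E v)

theorem ConvexOn.setOf_not_differentiableAt_line_eq {u : E → ℝ} (hu : ConvexOn ℝ univ u)
    (v : E) :
    {x | ¬ DifferentiableAt ℝ (fun t : ℝ => u (x + t • v)) 0} =
      ⋃ j : ℕ, {x | ∀ s t : ℝ, s < 0 → 0 < t →
        1 / (j + 1 : ℝ) ≤
          slope (fun τ => u (x + τ • v)) 0 t - slope (fun τ => u (x + τ • v)) 0 s} := by
  ext x
  simp [(hu.comp_line x v).not_differentiableAt_iff_exists_nat (a := 0) (by simp)]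

theorem isClosed_setOf_le_slope_line_sub_slope_line [TopologicalSpace E] [ContinuousAdd E]
    [ContinuousSMul ℝ E] {u : E → ℝ} (hu : Continuous u) (v : E) (c : ℝ) :
    IsClosed {x | ∀ s t : ℝ, s < 0 → 0 < t →
      c ≤ slope (fun τ => u (x + τ • v)) 0 t - slope (fun τ => u (x + τ • v)) 0 s} := by
  simp only [ofPred_forall]
  refine isClosed_iInter fun s => isClosed_iInter fun t => isClosed_iInter fun _ =>
    isClosed_iInter fun _ => isClosed_le continuous_const ?_
  simp only [slope_def_field]
  fun_prop

end Line

theorem exists_isOpen_iUnion_iInter_eq_of_isClosed {X : Type*} [TopologicalSpace X]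
    [PerfectlyNormalSpace X] {F : ℕ → Set X} (hF : ∀ j, IsClosed (F j)) :
    ∃ G : ℕ → ℕ → Set X, (∀ j k, IsOpen (G j k)) ∧ ⋃ j, F j = ⋃ j, ⋂ k, G j k := by
  choose G hG hFG using fun j => isGδ_iff_eq_iInter_nat.mp (hF j).isGδ
  exact ⟨G, hG, iUnion_congr hFG⟩

theorem stmt4 {n : ℕ} (u : EuclideanSpace ℝ (Fin n) → ℝ)
    (hconv : ConvexOn ℝ Set.univ u) (i : Fin n) :
    ∃ G : ℕ → ℕ → Set (EuclideanSpace ℝ (Fin n)),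
      (∀ j k, IsOpen (G j k)) ∧
      {x | ¬ DifferentiableAt ℝ
          (fun t : ℝ => u (x + t • EuclideanSpace.single i (1 : ℝ))) 0} =
        ⋃ j, ⋂ k, G j k := by
  obtain ⟨G, hG, hFG⟩ := exists_isOpen_iUnion_iInter_eq_of_isClosed fun j =>
    isClosed_setOf_le_slope_line_sub_slope_line hconv.locallyLipschitz.continuous
      (EuclideanSpace.single i 1) (1 / (j + 1))
  exact ⟨G, hG, (hconv.setOf_not_differentiableAt_line_eq _).trans hFG⟩
end

section
/- Let v : ℝⁿ → ℝ be convex with strict epigraph E(v) = {(x,t) : t > v(x)}. Fix r > 0 and let Z be the set of points y = (x, v(x)) on the graph of v such that there exists c' ∈ ℝ^{n+1} with the open ball B(c',r) ⊆ E(v) and y ∈ ∂B(c',r) (the sphere of center c' and radius r). Then for each y ∈ Z the center c' is unique, and the map γ : Z → ℝ^{n+1} sending y to this center c' is Lipschitz with constant 1. -/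
open Metric Set
open scoped RealInnerProductSpace

/-!
The admissible centers `K = {c | ball c r ⊆ E}` of a convex set `E` form a convex set. If the
sphere of an admissible center `c` passes through a point `y ∉ E`, then every admissible center
lies at distance at least `r = ‖y - c‖` from `y`, so `c` is the nearest point of `K` to `y`.
Hence `c` is characterised by the variational inequality `⟪y - c, w - c⟫ ≤ 0` on `K`, and, as for
any metric projection onto a convex set, it depends `1`-Lipschitz on `y`; taking `y₁ = y₂` gives
uniqueness. The strict epigraph of a convex function is convex and misses the graph.
-/

theorem Convex.setOf_ball_subset {F : Type*} [SeminormedAddCommGroup F] [NormedSpace ℝ F]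
    {s : Set F} (hs : Convex ℝ s) (r : ℝ) : Convex ℝ {c | ball c r ⊆ s} := by
  have : {c | ball c r ⊆ s} = ⋂ b ∈ ball (0 : F) r, (fun c => c + b) ⁻¹' s := by
    ext c
    simp only [mem_ofPred_eq, mem_iInter, mem_preimage, mem_ball_zero_iff]
    refine ⟨fun h b hb => h (by simpa [dist_eq_norm] using hb), fun h z hz => ?_⟩
    simpa using h (z - c) (by rwa [← dist_eq_norm])
  rw [this]
  exact convex_iInter₂ fun b _ => hs.translate_preimage_left b

theorem dist_le_dist_of_inner_sub_nonpos {F : Type*} [NormedAddCommGroup F]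
    [InnerProductSpace ℝ F] {y₁ y₂ c₁ c₂ : F} (h₁ : ⟪y₁ - c₁, c₂ - c₁⟫ ≤ 0)
    (h₂ : ⟪y₂ - c₂, c₁ - c₂⟫ ≤ 0) : dist c₁ c₂ ≤ dist y₁ y₂ := by
  rw [dist_eq_norm, dist_eq_norm]
  have hsplit : ⟪c₁ - c₂, y₁ - y₂⟫ = ‖c₁ - c₂‖ ^ 2 - ⟪y₁ - c₁, c₂ - c₁⟫ - ⟪y₂ - c₂, c₁ - c₂⟫ := by
    rw [← real_inner_self_eq_norm_sq]
    simp only [inner_sub_left, inner_sub_right, real_inner_comm]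
    ring
  have hsq : ‖c₁ - c₂‖ ^ 2 ≤ ‖c₁ - c₂‖ * ‖y₁ - y₂‖ := by
    linarith [real_inner_le_norm (c₁ - c₂) (y₁ - y₂)]
  nlinarith [norm_nonneg (c₁ - c₂), norm_nonneg (y₁ - y₂)]

section TouchingBalls

variable {F : Type*} [NormedAddCommGroup F] [InnerProductSpace ℝ F] {E : Set F} {r : ℝ}

theorem Convex.inner_sub_nonpos_of_mem_sphere (hE : Convex ℝ E) {y c c' : F} (hy : y ∉ E)
    (hc : ball c r ⊆ E) (hyc : y ∈ sphere c r) (hc' : ball c' r ⊆ E) :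
    ⟪y - c, c' - c⟫ ≤ 0 := by
  refine (norm_eq_iInf_iff_real_inner_le_zero (hE.setOf_ball_subset r) hc).1 ?_ c' hc'
  have : Nonempty {c | ball c r ⊆ E} := ⟨⟨c, hc⟩⟩
  have hbdd : BddBelow (range fun w : {c | ball c r ⊆ E} => ‖y - w‖) :=
    ⟨0, by rintro _ ⟨w, rfl⟩; exact norm_nonneg _⟩
  refine le_antisymm (le_ciInf fun w => ?_) (ciInf_le hbdd ⟨c, hc⟩)
  rw [← dist_eq_norm, ← dist_eq_norm, mem_sphere.1 hyc]
  exact not_lt.1 fun h => hy (w.2 (mem_ball.2 h))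

theorem Convex.dist_le_dist_of_mem_sphere (hE : Convex ℝ E) {y₁ y₂ c₁ c₂ : F}
    (hy₁ : y₁ ∉ E) (hy₂ : y₂ ∉ E) (hc₁ : ball c₁ r ⊆ E) (hyc₁ : y₁ ∈ sphere c₁ r)
    (hc₂ : ball c₂ r ⊆ E) (hyc₂ : y₂ ∈ sphere c₂ r) : dist c₁ c₂ ≤ dist y₁ y₂ :=
  dist_le_dist_of_inner_sub_nonpos (hE.inner_sub_nonpos_of_mem_sphere hy₁ hc₁ hyc₁ hc₂)
    (hE.inner_sub_nonpos_of_mem_sphere hy₂ hc₂ hyc₂ hc₁)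

end TouchingBalls

theorem stmt5_general {n : ℕ} (v : EuclideanSpace ℝ (Fin n) → ℝ)
    (hconv : ConvexOn ℝ Set.univ v) (r : ℝ) :
    let e := WithLp.equiv 2 (EuclideanSpace ℝ (Fin n) × ℝ)
    let E : Set (WithLp 2 (EuclideanSpace ℝ (Fin n) × ℝ)) := {p | v (e p).1 < (e p).2}
    let Z : Set (WithLp 2 (EuclideanSpace ℝ (Fin n) × ℝ)) :=
      {y | (e y).2 = v (e y).1 ∧ ∃ c', Metric.ball c' r ⊆ E ∧ y ∈ Metric.sphere c' r}
    (∀ y ∈ Z, ∃! c', Metric.ball c' r ⊆ E ∧ y ∈ Metric.sphere c' r) ∧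
    ∃ γ : WithLp 2 (EuclideanSpace ℝ (Fin n) × ℝ) → WithLp 2 (EuclideanSpace ℝ (Fin n) × ℝ),
      LipschitzOnWith 1 γ Z ∧
      ∀ y ∈ Z, Metric.ball (γ y) r ⊆ E ∧ y ∈ Metric.sphere (γ y) r := by
  intro e E Z
  have hE : Convex ℝ E := by
    have := hconv.convex_strict_epigraph.linear_preimage
      (WithLp.linearEquiv 2 ℝ (EuclideanSpace ℝ (Fin n) × ℝ)).toLinearMap
    simpa [E, e] using this
  have hZE : ∀ y ∈ Z, y ∉ E := fun y hy hyE => (hyE : v _ < _).ne' hy.1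
  choose! γ hγ using fun y (hy : y ∈ Z) => hy.2
  refine ⟨fun y hy => ⟨γ y, hγ y hy, fun c hc => ?_⟩, γ, ?_, hγ⟩
  · exact dist_le_zero.1 <| (hE.dist_le_dist_of_mem_sphere (hZE y hy) (hZE y hy)
      hc.1 hc.2 (hγ y hy).1 (hγ y hy).2).trans_eq (dist_self y)
  · refine LipschitzOnWith.of_dist_le_mul fun y₁ hy₁ y₂ hy₂ => ?_
    simpa using hE.dist_le_dist_of_mem_sphere (hZE y₁ hy₁) (hZE y₂ hy₂)
      (hγ y₁ hy₁).1 (hγ y₁ hy₁).2 (hγ y₂ hy₂).1 (hγ y₂ hy₂).2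

theorem stmt5 {n : ℕ} (v : EuclideanSpace ℝ (Fin n) → ℝ)
    (hconv : ConvexOn ℝ Set.univ v) (r : ℝ) (hr : 0 < r) :
    let e := WithLp.equiv 2 (EuclideanSpace ℝ (Fin n) × ℝ)
    let E : Set (WithLp 2 (EuclideanSpace ℝ (Fin n) × ℝ)) := {p | v (e p).1 < (e p).2}
    let Z : Set (WithLp 2 (EuclideanSpace ℝ (Fin n) × ℝ)) :=
      {y | (e y).2 = v (e y).1 ∧ ∃ c', Metric.ball c' r ⊆ E ∧ y ∈ Metric.sphere c' r}
    (∀ y ∈ Z, ∃! c', Metric.ball c' r ⊆ E ∧ y ∈ Metric.sphere c' r) ∧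
    ∃ γ : WithLp 2 (EuclideanSpace ℝ (Fin n) × ℝ) → WithLp 2 (EuclideanSpace ℝ (Fin n) × ℝ),
      LipschitzOnWith 1 γ Z ∧
      ∀ y ∈ Z, Metric.ball (γ y) r ⊆ E ∧ y ∈ Metric.sphere (γ y) r :=
  stmt5_general v hconv r
end

section
/- Let u : ℝⁿ → ℝ be convex and differentiable at x, and suppose a sphere S(c,r) of radius r > 0 supports the graph of u from above at (x, u(x)) (i.e. (x,u(x)) lies on the sphere, the open ball B(c,r) is disjoint from the graph of u, and the last coordinate of c exceeds u(P(c)) where P is the projection onto ℝⁿ). Then K(u,x) ≤ (1 + |∇u(x)|²)^{3/2} / r. -/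
open Filter Metric Set
open scoped RealInnerProductSpace Topology

/-- Slodkowski's generalized largest eigenvalue `K(u,x₀)`. -/
noncomputable def Kfn {n : ℕ} (u : EuclideanSpace ℝ (Fin n) → ℝ)
    (x₀ : EuclideanSpace ℝ (Fin n)) : EReal :=
  Filter.limsup (fun ε : ℝ =>
    sSup ((fun h : EuclideanSpace ℝ (Fin n) =>
      ((2 / ε ^ 2 * (u (x₀ + ε • h) - u x₀ - ε * ⟪gradient u x₀, h⟫) : ℝ) : EReal)) ''
        {h | ‖h‖ = 1}))
    (𝓝[≠] (0 : ℝ))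

set_option maxHeartbeats 1000000 in
theorem stmt7 {n : ℕ} (u : EuclideanSpace ℝ (Fin n) → ℝ)
    (x : EuclideanSpace ℝ (Fin n)) (hconv : ConvexOn ℝ Set.univ u)
    (hdiff : DifferentiableAt ℝ u x)
    (c : WithLp 2 (EuclideanSpace ℝ (Fin n) × ℝ)) (r : ℝ) (hr : 0 < r)
    (hmem : (WithLp.equiv 2 (EuclideanSpace ℝ (Fin n) × ℝ)).symm (x, u x) ∈ Metric.sphere c r)
    (hdisj : ∀ y : EuclideanSpace ℝ (Fin n),
      (WithLp.equiv 2 (EuclideanSpace ℝ (Fin n) × ℝ)).symm (y, u y) ∉ Metric.ball c r)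
    (habove : u ((WithLp.equiv 2 (EuclideanSpace ℝ (Fin n) × ℝ)) c).1 <
      ((WithLp.equiv 2 (EuclideanSpace ℝ (Fin n) × ℝ)) c).2) :
    Kfn u x ≤ (((1 + ‖gradient u x‖ ^ 2) ^ ((3 : ℝ) / 2) / r : ℝ) : EReal) := by
  classical
  have habove' : u c.fst < c.snd := habove
  set G := gradient u x with hG
  have hu' : HasFDerivAt u (InnerProductSpace.toDual ℝ _ G) x := hdiff.hasGradientAt.hasFDerivAt
  -- scalar form of the disjointness condition
  have keyA : ∀ y, r ^ 2 ≤ ‖y - c.fst‖ ^ 2 + (u y - c.snd) ^ 2 := by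
    intro y
    have h := hdisj y
    rw [Metric.mem_ball, not_lt, WithLp.prod_dist_eq_of_L2] at h
    have hA : (0:ℝ) ≤ dist ((WithLp.equiv 2 (EuclideanSpace ℝ (Fin n) × ℝ)).symm (y, u y)).fst
        c.fst ^ 2
        + dist ((WithLp.equiv 2 (EuclideanSpace ℝ (Fin n) × ℝ)).symm (y, u y)).snd c.snd ^ 2 := by
      positivity
    have h2 := pow_le_pow_left₀ hr.le h 2
    rw [Real.sq_sqrt hA] at h2
    simpa [dist_eq_norm, Real.dist_eq, sq_abs] using h2
  -- scalar form of the sphere membership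
  have keyx : ‖x - c.fst‖ ^ 2 + (u x - c.snd) ^ 2 = r ^ 2 := by
    have h := hmem
    rw [Metric.mem_sphere, WithLp.prod_dist_eq_of_L2] at h
    have hA : (0:ℝ) ≤ dist ((WithLp.equiv 2 (EuclideanSpace ℝ (Fin n) × ℝ)).symm (x, u x)).fst
        c.fst ^ 2
        + dist ((WithLp.equiv 2 (EuclideanSpace ℝ (Fin n) × ℝ)).symm (x, u x)).snd c.snd ^ 2 := by
      positivity
    have h2 : (Real.sqrt _) ^ 2 = r ^ 2 := congrArg (fun t => t ^ 2) h
    rw [Real.sq_sqrt hA] at h2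
    simpa [dist_eq_norm, Real.dist_eq, sq_abs] using h2
  -- first-order condition at the touching point
  have heq : x - c.fst = (c.snd - u x) • G := by
    have hminloc : IsLocalMin (fun y => ‖y - c.fst‖ ^ 2 + (u y - c.snd) * (u y - c.snd)) x := by
      have : IsMinOn (fun y => ‖y - c.fst‖ ^ 2 + (u y - c.snd) * (u y - c.snd)) Set.univ x := by
        intro y _
        have h1 := keyA y
        simp only [mem_setOf_eq, ← sq]
        nlinarith [keyx]
      exact this.isLocalMin univ_mem
    have h1 : HasFDerivAt (fun y : EuclideanSpace ℝ (Fin n) => y - c.fst)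
        (ContinuousLinearMap.id ℝ _) x := (hasFDerivAt_id x).sub_const _
    have h2 := h1.norm_sq
    have h3 := (hu'.sub_const c.snd).mul (hu'.sub_const c.snd)
    have hφ := h2.add h3
    have hz := hminloc.hasFDerivAt_eq_zero hφ
    have hev : ∀ v, 2 * ⟪x - c.fst, v⟫ + 2 * (u x - c.snd) * ⟪G, v⟫ = 0 := by
      intro v
      have := congrArg (fun L => L v) hz
      simp only [ContinuousLinearMap.add_apply, ContinuousLinearMap.smul_apply,
        ContinuousLinearMap.comp_apply, ContinuousLinearMap.id_apply,
        ContinuousLinearMap.zero_apply, innerSL_apply_apply, smul_eq_mul,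
        InnerProductSpace.toDual_apply_apply, two_smul] at this
      linarith [this]
    have hv : ∀ v, ⟪(x - c.fst) - (c.snd - u x) • G, v⟫ = 0 := by
      intro v
      rw [inner_sub_left, real_inner_smul_left]
      have := hev v; linarith
    have := hv ((x - c.fst) - (c.snd - u x) • G)
    rw [real_inner_self_eq_norm_sq] at this
    have hn : (x - c.fst) - (c.snd - u x) • G = 0 := by
      rwa [pow_eq_zero_iff (by norm_num), norm_eq_zero] at this
    exact sub_eq_zero.mp hn
  set m : ℝ := c.snd - u x with hm
  have hnx : ‖x - c.fst‖ ^ 2 = m ^ 2 * ‖G‖ ^ 2 := by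
    rw [heq, norm_smul, mul_pow, Real.norm_eq_abs, sq_abs]
  have hm2 : m ^ 2 * (1 + ‖G‖ ^ 2) = r ^ 2 := by
    have h1 := keyx
    rw [hnx] at h1
    have h3 : (u x - c.snd) ^ 2 = m ^ 2 := by rw [hm]; ring
    nlinarith [h1, h3]
  -- positivity of m
  have hmpos : 0 < m := by
    rcases lt_trichotomy m 0 with hneg | hzero | hpos
    · exfalso
      -- u x > c.snd; use continuity and IVT to find a graph point inside the ball
      have ucont : Continuous u := by
        have := hconv.continuousOn isOpen_univ
        rwa [continuousOn_univ] at this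
      have hc1 : u c.fst ≤ c.snd - r := by
        have h := keyA c.fst
        simp only [sub_self, norm_zero] at h
        by_contra hcon
        push_neg at hcon
        have h5 : (u c.fst - c.snd) ^ 2 < r ^ 2 := sq_lt_sq' (by linarith) (by linarith [habove'])
        nlinarith [h, h5]
      have hf : Continuous fun t : ℝ => u (c.fst + t • (x - c.fst)) :=
        ucont.comp (continuous_const.add (continuous_id.smul continuous_const))
      have hmem' : c.snd ∈ Icc (u (c.fst + (0:ℝ) • (x - c.fst))) (u (c.fst + (1:ℝ) • (x - c.fst))) := by
        constructor
        · simpa using by linarith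
        · simp only [one_smul, add_sub_cancel]
          linarith
      obtain ⟨t, ht, hft⟩ := intermediate_value_Icc (by norm_num : (0:ℝ) ≤ 1)
        hf.continuousOn hmem'
      have hft' : u (c.fst + t • (x - c.fst)) = c.snd := hft
      have hk := keyA (c.fst + t • (x - c.fst))
      rw [hft'] at hk
      simp only [add_sub_cancel_left, sub_self] at hk
      have hns : ‖t • (x - c.fst)‖ ^ 2 = t ^ 2 * ‖x - c.fst‖ ^ 2 := by
        rw [norm_smul, mul_pow, Real.norm_eq_abs, sq_abs]
      rw [hns, hnx] at hk
      have ht0 := ht.1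
      have ht1 := ht.2
      have ht2 : t ^ 2 ≤ 1 := by nlinarith
      nlinarith [hk, hm2, ht2, sq_nonneg (m * ‖G‖),
        mul_pos (neg_pos.mpr hneg) (neg_pos.mpr hneg)]
    · exfalso; rw [hzero] at hm2; nlinarith
    · exact hpos
  -- the key pointwise estimate
  have main : ∀ δ : ℝ, 0 < δ → ∀ ε : ℝ, ε ≠ 0 → ∀ h : EuclideanSpace ℝ (Fin n), ‖h‖ = 1 →
      |u (x + ε • h) - u x - ε * ⟪G, h⟫| ≤ δ * |ε| →
      2 / ε ^ 2 * (u (x + ε • h) - u x - ε * ⟪G, h⟫) ≤ (1 + (‖G‖ + δ) ^ 2) / m := by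
    intro δ hδ ε hε h hh hd
    set a : ℝ := ⟪G, h⟫ with ha
    set d : ℝ := u (x + ε • h) - u x - ε * a with hdd
    have hkey := keyA (x + ε • h)
    have hy1 : x + ε • h - c.fst = ε • h + m • G := by
      have h0 : x + ε • h - c.fst = ε • h + (x - c.fst) := by abel
      rw [h0, heq]
    have hn1 : ‖ε • h + m • G‖ ^ 2 = ε ^ 2 + 2 * ε * m * a + m ^ 2 * ‖G‖ ^ 2 := by
      rw [norm_add_sq_real, real_inner_smul_left, real_inner_smul_right,
        ← real_inner_comm h G, ← ha, norm_smul, norm_smul, Real.norm_eq_abs, Real.norm_eq_abs,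
        mul_pow, mul_pow, sq_abs, sq_abs, hh]
      ring
    have huy : u (x + ε • h) - c.snd = ε * a + d - m := by
      rw [hdd, hm]; ring
    rw [hy1, hn1, huy] at hkey
    have h2md : 2 * m * d ≤ ε ^ 2 + (ε * a + d) ^ 2 := by nlinarith [hkey, hm2]
    have haG : |a| ≤ ‖G‖ := by
      have := abs_real_inner_le_norm G h
      rwa [hh, mul_one] at this
    have habs : |ε * a + d| ≤ |ε| * (‖G‖ + δ) := by
      calc |ε * a + d| ≤ |ε * a| + |d| := abs_add_le _ _
        _ ≤ |ε| * ‖G‖ + δ * |ε| := by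
            rw [abs_mul]
            exact add_le_add (mul_le_mul_of_nonneg_left haG (abs_nonneg ε)) hd
        _ = |ε| * (‖G‖ + δ) := by ring
    have habs2 : (ε * a + d) ^ 2 ≤ ε ^ 2 * (‖G‖ + δ) ^ 2 := by
      have := pow_le_pow_left₀ (abs_nonneg _) habs 2
      rwa [sq_abs, mul_pow, sq_abs] at this
    have hε2 : (0:ℝ) < ε ^ 2 := by positivity
    rw [div_mul_eq_mul_div, div_le_div_iff₀ hε2 hmpos]
    nlinarith [h2md, habs2]
  -- eventual bound for the sSup
  have hev : ∀ δ : ℝ, 0 < δ → ∀ᶠ ε in 𝓝[≠] (0:ℝ),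
      sSup ((fun h : EuclideanSpace ℝ (Fin n) =>
        ((2 / ε ^ 2 * (u (x + ε • h) - u x - ε * ⟪gradient u x, h⟫) : ℝ) : EReal)) ''
          {h | ‖h‖ = 1}) ≤ (((1 + (‖G‖ + δ) ^ 2) / m : ℝ) : EReal) := by
    intro δ hδ
    have hlo := hu'.isLittleO.def hδ
    rw [Metric.eventually_nhds_iff] at hlo
    obtain ⟨ρ, hρ, hball⟩ := hlo
    have h1 : ∀ᶠ ε in 𝓝[≠] (0:ℝ), |ε| < ρ :=
      eventually_nhdsWithin_of_eventually_nhds (by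
        have := Metric.ball_mem_nhds (0:ℝ) hρ
        filter_upwards [this] with ε hε
        simpa [Real.dist_eq] using hε)
    filter_upwards [h1, eventually_mem_nhdsWithin] with ε hερ (hε0 : ε ∈ ({0}ᶜ : Set ℝ))
    have hεne : ε ≠ 0 := hε0
    apply sSup_le
    rintro z ⟨h, hh, rfl⟩
    rw [EReal.coe_le_coe_iff]
    apply main δ hδ ε hεne h hh
    have hdist : dist (x + ε • h) x < ρ := by
      rw [dist_eq_norm, add_sub_cancel_left, norm_smul, hh, mul_one]
      exact hερ
    have := hball hdist
    rw [add_sub_cancel_left, map_smul, InnerProductSpace.toDual_apply_apply, norm_smul, hh,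
      mul_one] at this
    simpa [smul_eq_mul, Real.norm_eq_abs] using this
  -- limsup bound for each δ
  have hlim : ∀ δ : ℝ, 0 < δ → Kfn u x ≤ (((1 + (‖G‖ + δ) ^ 2) / m : ℝ) : EReal) := by
    intro δ hδ
    exact limsup_le_of_le (by isBoundedDefault) (hev δ hδ)
  -- identify the limit value
  have htarget : ((1 + ‖G‖ ^ 2) ^ ((3 : ℝ) / 2) / r : ℝ) = (1 + ‖G‖ ^ 2) / m := by
    set k : ℝ := 1 + ‖G‖ ^ 2 with hk
    have hkpos : 0 < k := by positivity
    have hmsqrt : m * Real.sqrt k = r := by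
      have h1 : Real.sqrt (m ^ 2 * k) = r := by rw [hm2, Real.sqrt_sq hr.le]
      rwa [Real.sqrt_mul (sq_nonneg m), Real.sqrt_sq hmpos.le] at h1
    have hsk : 0 < Real.sqrt k := Real.sqrt_pos.mpr hkpos
    rw [show (3:ℝ)/2 = 1 + 1/2 by norm_num, Real.rpow_add hkpos, Real.rpow_one,
      ← Real.sqrt_eq_rpow]
    rw [div_eq_div_iff hr.ne' hmpos.ne', ← hmsqrt]
    ring
  rw [htarget]
  -- pass to the limit δ → 0⁺
  have hcont : Tendsto (fun δ : ℝ => (((1 + (‖G‖ + δ) ^ 2) / m : ℝ) : EReal)) (𝓝[>] (0:ℝ))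
      (𝓝 (((1 + ‖G‖ ^ 2) / m : ℝ) : EReal)) := by
    have hc : Continuous fun δ : ℝ => (1 + (‖G‖ + δ) ^ 2) / m := by
      apply Continuous.div_const
      continuity
    have h0 : Tendsto (fun δ : ℝ => (1 + (‖G‖ + δ) ^ 2) / m) (𝓝[>] (0:ℝ))
        (𝓝 ((1 + ‖G‖ ^ 2) / m)) := by
      have := (hc.tendsto 0).mono_left (nhdsWithin_le_nhds (s := Ioi (0:ℝ)))
      simpa using this
    exact (continuous_coe_real_ereal.tendsto _).comp h0
  exact ge_of_tendsto hcont (eventually_mem_nhdsWithin.mono fun δ hδ => hlim δ hδ)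
end

section
/- Let f : ℝⁿ → ℝ be convex, differentiable at x₀, and suppose f* is quadratically convex at y₀ = ∇f(x₀) with modulus 1/k, meaning f*(y) ≥ f*(y₀) + ⟨x₀, y−y₀⟩ + (1/(2k))|y−y₀|² for all y. Then K(f,x₀) ≤ k. -/
/-!
A quadratic lower bound for `f*` at `y₀` dualizes into the quadratic upper bound
`f x ≤ f x₀ + ⟪y₀, x - x₀⟫ + k/2 ‖x - x₀‖²`: evaluate `f*` at a subgradient `v` of `f` at `x`,
where `f* v = ⟪v, x⟫ - f x`, and absorb `⟪v - y₀, x - x₀⟫` by Young's inequality. Every second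
difference quotient defining `K(f, x₀)` is then at most `k`.
-/

open Filter Metric Set
open scoped RealInnerProductSpace Topology

/-- The Legendre–Fenchel conjugate, valued in `EReal`. -/
noncomputable def conjE {n : ℕ} (f : EuclideanSpace ℝ (Fin n) → ℝ)
    (y : EuclideanSpace ℝ (Fin n)) : EReal :=
  ⨆ x : EuclideanSpace ℝ (Fin n), ((⟪y, x⟫ - f x : ℝ) : EReal)

-- Separate `(x, f x)` from the open convex strict epigraph of `f` by Hahn–Banach.
theorem ConvexOn.exists_dual_subgradient {E : Type*} [NormedAddCommGroup E] [NormedSpace ℝ E]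
    {f : E → ℝ} (hconv : ConvexOn ℝ univ f) (hcont : Continuous f)
    (x : E) : ∃ φ : StrongDual ℝ E, ∀ z, f x + φ (z - x) ≤ f z := by
  have hopen : IsOpen {p : E × ℝ | p.1 ∈ univ ∧ f p.1 < p.2} := by
    simpa using isOpen_lt (hcont.comp continuous_fst) continuous_snd
  obtain ⟨l, hl⟩ := geometric_hahn_banach_point_open hconv.convex_strict_epigraph hopen
    (x := (x, f x)) (by simp)
  set c := l (0, 1)
  have hsplit : ∀ z t, l (z, t) = l (z, 0) + t * c := fun z t => by
    have : ((z, t) : E × ℝ) = (z, 0) + t • (0, 1) := by simp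
    rw [this, map_add, map_smul, smul_eq_mul]
  have hc : 0 < c := by
    have := hl (x, f x + 1) (by simp)
    rw [hsplit x (f x + 1), hsplit x (f x)] at this
    linarith
  have hsupp : ∀ z, l (x, 0) + c * f x ≤ l (z, 0) + c * f z := fun z => by
    refine le_of_forall_pos_lt_add fun ε hε => ?_
    have := hl (z, f z + ε / c) (by simpa using div_pos hε hc)
    rw [hsplit z, hsplit x, add_mul, div_mul_cancel₀ _ hc.ne'] at this
    linarith
  refine ⟨-c⁻¹ • l.comp (.inl ℝ E ℝ), fun z => ?_⟩
  have h := mul_le_mul_of_nonneg_left (hsupp z) (inv_nonneg.mpr hc.le)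
  simp only [smul_apply, ContinuousLinearMap.comp_apply,
    ContinuousLinearMap.inl_apply, map_sub, smul_eq_mul] at h ⊢
  field_simp at h ⊢
  linarith

theorem ConvexOn.exists_subgradient {E : Type*} [NormedAddCommGroup E] [InnerProductSpace ℝ E]
    [FiniteDimensional ℝ E] {f : E → ℝ} (hconv : ConvexOn ℝ univ f) (x : E) :
    ∃ v : E, ∀ z, f x + ⟪v, z - x⟫ ≤ f z := by
  obtain ⟨φ, hφ⟩ := hconv.exists_dual_subgradient
    (continuousOn_univ.mp (hconv.continuousOn isOpen_univ)) x
  exact ⟨(InnerProductSpace.toDual ℝ E).symm φ, by simpa using hφ⟩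

theorem real_inner_le_inv_mul_sq_add_mul_sq {E : Type*} [NormedAddCommGroup E]
    [InnerProductSpace ℝ E] {k : ℝ} (hk : 0 < k) (u w : E) :
    ⟪u, w⟫ ≤ 1 / (2 * k) * ‖u‖ ^ 2 + k / 2 * ‖w‖ ^ 2 := by
  have hamgm := two_mul_le_add_sq ‖u‖ (k * ‖w‖)
  calc ⟪u, w⟫ ≤ ‖u‖ * ‖w‖ := real_inner_le_norm u w
    _ ≤ 1 / (2 * k) * ‖u‖ ^ 2 + k / 2 * ‖w‖ ^ 2 := by
      rw [← sub_nonneg]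
      have : 1 / (2 * k) * ‖u‖ ^ 2 + k / 2 * ‖w‖ ^ 2 - ‖u‖ * ‖w‖
          = (‖u‖ ^ 2 + (k * ‖w‖) ^ 2 - 2 * ‖u‖ * (k * ‖w‖)) / (2 * k) := by
        field_simp
      rw [this]
      exact div_nonneg (by linarith) (by positivity)

section Conjugate

variable {n : ℕ} {f : EuclideanSpace ℝ (Fin n) → ℝ}

theorem conjE_le_of_subgradient {x v : EuclideanSpace ℝ (Fin n)}
    (hv : ∀ z, f x + ⟪v, z - x⟫ ≤ f z) : conjE f v ≤ ((⟪v, x⟫ - f x : ℝ) : EReal) :=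
  iSup_le fun z => EReal.coe_le_coe_iff.mpr <| by linarith [hv z, inner_sub_right (𝕜 := ℝ) v z x]

theorem le_quadratic_of_conjE_ge_quadratic (hconv : ConvexOn ℝ univ f) {k : ℝ} (hk : 0 < k)
    {x₀ y₀ : EuclideanSpace ℝ (Fin n)}
    (hquad : ∀ y, conjE f y ≥
      ((⟪y₀, x₀⟫ - f x₀ + ⟪x₀, y - y₀⟫ + 1 / (2 * k) * ‖y - y₀‖ ^ 2 : ℝ) : EReal))
    (x : EuclideanSpace ℝ (Fin n)) :
    f x ≤ f x₀ + ⟪y₀, x - x₀⟫ + k / 2 * ‖x - x₀‖ ^ 2 := by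
  obtain ⟨v, hv⟩ := hconv.exists_subgradient x
  have hv_lower : ⟪y₀, x₀⟫ - f x₀ + ⟪x₀, v - y₀⟫ + 1 / (2 * k) * ‖v - y₀‖ ^ 2
      ≤ ⟪v, x⟫ - f x :=
    EReal.coe_le_coe_iff.mp ((hquad v).trans (conjE_le_of_subgradient hv))
  have hyoung := real_inner_le_inv_mul_sq_add_mul_sq hk (v - y₀) (x - x₀)
  simp only [inner_sub_left, inner_sub_right, real_inner_comm x₀] at hv_lower hyoung ⊢
  linarith

theorem Kfn_le_of_le_quadratic {x₀ : EuclideanSpace ℝ (Fin n)} {k : ℝ}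
    (hf : ∀ x, f x ≤ f x₀ + ⟪gradient f x₀, x - x₀⟫ + k / 2 * ‖x - x₀‖ ^ 2) :
    Kfn f x₀ ≤ k := by
  refine limsup_le_of_le (by isBoundedDefault) ?_
  filter_upwards [self_mem_nhdsWithin] with ε (hε : ε ≠ 0)
  refine sSup_le ?_
  rintro _ ⟨h, hh : ‖h‖ = 1, rfl⟩
  have hx := hf (x₀ + ε • h)
  rw [add_sub_cancel_left, real_inner_smul_right, norm_smul, hh, mul_one, Real.norm_eq_abs,
    sq_abs] at hx
  rw [EReal.coe_le_coe_iff, div_mul_eq_mul_div, div_le_iff₀ (by positivity)]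
  linarith

end Conjugate

theorem stmt10_general {n : ℕ} (f : EuclideanSpace ℝ (Fin n) → ℝ)
    (x₀ : EuclideanSpace ℝ (Fin n)) (hconv : ConvexOn ℝ Set.univ f)
    (k : ℝ) (hk : 0 < k)
    (hquad : ∀ y : EuclideanSpace ℝ (Fin n),
      conjE f y ≥ ((⟪gradient f x₀, x₀⟫ - f x₀ + ⟪x₀, y - gradient f x₀⟫ +
        1 / (2 * k) * ‖y - gradient f x₀‖ ^ 2 : ℝ) : EReal)) :
    Kfn f x₀ ≤ (k : EReal) :=
  Kfn_le_of_le_quadratic (le_quadratic_of_conjE_ge_quadratic hconv hk hquad)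

theorem stmt10 {n : ℕ} (f : EuclideanSpace ℝ (Fin n) → ℝ)
    (x₀ : EuclideanSpace ℝ (Fin n)) (hconv : ConvexOn ℝ Set.univ f)
    (hdiff : DifferentiableAt ℝ f x₀) (k : ℝ) (hk : 0 < k)
    (hquad : ∀ y : EuclideanSpace ℝ (Fin n),
      conjE f y ≥ ((⟪gradient f x₀, x₀⟫ - f x₀ + ⟪x₀, y - gradient f x₀⟫ +
        1 / (2 * k) * ‖y - gradient f x₀‖ ^ 2 : ℝ) : EReal)) :
    Kfn f x₀ ≤ (k : EReal) :=
  stmt10_general f x₀ hconv k hk hquad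
end

section
/- Let f : ℝⁿ → ℝ be convex with a sphere of support of radius r > 0 to its graph from above at (x₀, f(x₀)), and suppose f is differentiable at x₀. Then for every m < r/(1+|∇f(x₀)|²)^{3/2}, f is sub-quadratically convex at x₀ with modulus 1/m, i.e. f(x) ≤ f(x₀) + ⟨∇f(x₀), x−x₀⟩ + (1/(2m))|x−x₀|² near x₀; consequently K(f,x₀) ≤ (1+|∇f(x₀)|²)^{3/2}/r. -/
/-!
The function `ψ y = ‖y - c₁‖² + (f y - c₂)²` is at least `r²` and equals `r²` at `x₀`, so its
derivative vanishes there: `x₀ - c₁ = β • ∇f(x₀)` with `β = c₂ - f x₀`. Comparing with the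
supporting hyperplane of the convex `f` at the point `c₁`, which lies below the sphere, forces
`β > 0`; hence `r = β √(1 + ‖∇f(x₀)‖²)`. Near `x₀` the graph stays below `c₂` and outside the
ball, so it lies under the lower hemisphere, whose curvature at `x₀` is
`(1 + ‖∇f(x₀)‖²) / β = (1 + ‖∇f(x₀)‖²)^{3/2} / r`; for the paraboloid of any larger curvature
this is checked by squaring. A quadratic upper bound of curvature `κ` gives `K(f, x₀) ≤ κ`.
-/

open Filter Metric Set
open scoped RealInnerProductSpace Topology

/-- With `a = ‖h‖`, `s = ⟪g, h⟫`, `G = ‖g‖` this is the squared form of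
`eventually_le_paraboloid_of_outside_sphere`: the right side is `r² - ‖β • g + h‖²`. -/
theorem sq_paraboloid_le {β m G a s : ℝ} (hm : 0 < m) (ha : 0 ≤ a) (ham : a ≤ m)
    (hs : |s| ≤ G * a) (haβ : (G + 1) * a ≤ β - m * (1 + G ^ 2)) :
    (-β + s + 1 / (2 * m) * a ^ 2) ^ 2 ≤ β ^ 2 - 2 * β * s - a ^ 2 := by
  have hs2 : s ^ 2 ≤ G ^ 2 * a ^ 2 := by
    rw [← sq_abs, ← mul_pow]; exact pow_le_pow_left₀ (abs_nonneg s) hs 2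
  have ha2 : a ^ 2 / (4 * m) ≤ a / 4 := by
    rw [div_le_div_iff₀ (by positivity) (by norm_num)]; nlinarith
  have hgap : 0 ≤ β - m * (1 + G ^ 2) - s - a ^ 2 / (4 * m) := by
    linarith [(le_abs_self s).trans hs]
  have hid : m * (β ^ 2 - 2 * β * s - a ^ 2 - (-β + s + 1 / (2 * m) * a ^ 2) ^ 2)
      = a ^ 2 * (β - m * (1 + G ^ 2) - s - a ^ 2 / (4 * m)) + m * (G ^ 2 * a ^ 2 - s ^ 2) := by
    field_simp; ring
  have hprod : 0 ≤ m * (β ^ 2 - 2 * β * s - a ^ 2 - (-β + s + 1 / (2 * m) * a ^ 2) ^ 2) := by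
    rw [hid]
    exact add_nonneg (mul_nonneg (sq_nonneg a) hgap) (mul_nonneg hm.le (sub_nonneg.mpr hs2))
  linarith [(mul_nonneg_iff_of_pos_left hm).mp hprod]

theorem div_rpow_three_halves_eq {r β A : ℝ} (hr : 0 ≤ r) (hβ : 0 ≤ β) (hA : 0 < A)
    (h : r ^ 2 = β ^ 2 * A) : r / A ^ ((3 : ℝ) / 2) = β / A := by
  have hr' : r = β * √A := by
    rw [← sq_eq_sq₀ hr (by positivity), mul_pow, Real.sq_sqrt hA.le, h]
  have hA32 : A ^ ((3 : ℝ) / 2) = A * √A := by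
    rw [show (3 : ℝ) / 2 = 1 + 1 / 2 by norm_num, Real.rpow_add hA, Real.rpow_one,
      Real.sqrt_eq_rpow]
  have : 0 < √A := Real.sqrt_pos.mpr hA
  rw [hr', hA32]
  field_simp

theorem WithLp.prod_dist_sq_eq_of_L2 {α β : Type*} [SeminormedAddCommGroup α]
    [SeminormedAddCommGroup β] (x y : WithLp 2 (α × β)) :
    dist x y ^ 2 = dist x.fst y.fst ^ 2 + dist x.snd y.snd ^ 2 := by
  rw [WithLp.prod_dist_eq_of_L2, Real.sq_sqrt (by positivity)]

section

variable {E : Type*} [NormedAddCommGroup E] [InnerProductSpace ℝ E]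

theorem ConvexOn.add_inner_gradient_le [CompleteSpace E] {s : Set E} {f : E → ℝ}
    (hf : ConvexOn ℝ s f) {x y : E} (hx : x ∈ s) (hy : y ∈ s) (hdiff : DifferentiableAt ℝ f x) :
    f x + ⟪gradient f x, y - x⟫ ≤ f y := by
  set L := AffineMap.lineMap (k := ℝ) x y
  have hline : HasDerivAt L (y - x) 0 := by
    simpa using AffineMap.hasDerivAt_lineMap (a := x) (b := y) (x := (0 : ℝ))
  have hderiv : HasDerivAt (f ∘ L) (fderiv ℝ f x (y - x)) 0 := by
    have hf' : HasFDerivAt f (fderiv ℝ f x) (L 0) := by simpa [L] using hdiff.hasFDerivAt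
    exact hf'.comp_hasDerivAt 0 hline
  have := (hf.comp_affineMap L).le_slope_of_hasDerivAt
    (by simpa [L] using hx) (by simpa [L] using hy) one_pos hderiv
  simp only [map_sub, slope_def_field, Function.comp_apply, AffineMap.lineMap_apply_one,
    AffineMap.lineMap_apply_zero, sub_zero, div_one, L] at this
  rw [inner_gradient_left, map_sub]
  linarith

theorem sub_eq_smul_gradient_of_isLocalMin [CompleteSpace E] {f : E → ℝ} {x₀ c₁ : E} {c₂ : ℝ}
    (hdiff : DifferentiableAt ℝ f x₀)
    (hmin : IsLocalMin (fun x ↦ ‖x - c₁‖ ^ 2 + (f x - c₂) ^ 2) x₀) :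
    x₀ - c₁ = (c₂ - f x₀) • gradient f x₀ := by
  simp_rw [← sq_abs (f _ - c₂), ← Real.norm_eq_abs] at hmin
  have hD := (((hasFDerivAt_id x₀).sub_const c₁).norm_sq).add
    ((hdiff.hasFDerivAt.sub_const c₂).norm_sq)
  have hzero (v : E) : ⟪x₀ - c₁ - (c₂ - f x₀) • gradient f x₀, v⟫ = 0 := by
    have := DFunLike.congr_fun (hmin.hasFDerivAt_eq_zero hD) v
    simp only [id_eq, map_sub, ContinuousLinearMap.comp_id, ContinuousLinearMap.sub_comp,
      add_apply, smul_apply, sub_apply, coe_innerSL_apply, nsmul_eq_mul, Nat.cast_ofNat,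
      ContinuousLinearMap.comp_apply, RCLike.inner_apply, Real.ringHom_apply, zero_apply] at this
    rw [inner_sub_left, inner_sub_left, real_inner_smul_left, inner_gradient_left]
    linarith
  rw [← sub_eq_zero, ← inner_self_eq_zero (𝕜 := ℝ)]
  exact hzero _

/-- The sphere about the origin of radius `β * √(1 + ‖g‖ ^ 2)` passes through `(β • g, -β)`, where
its lower hemisphere has gradient `g`; points outside the ball and below the equator lie, near
that point, under the paraboloid of curvature `1 / m`. -/
theorem eventually_le_paraboloid_of_outside_sphere (g : E) {β m : ℝ} (hm : 0 < m)
    (hmβ : m * (1 + ‖g‖ ^ 2) < β) :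
    ∀ᶠ h in 𝓝 (0 : E), ∀ z : ℝ, z < 0 → β ^ 2 * (1 + ‖g‖ ^ 2) ≤ ‖β • g + h‖ ^ 2 + z ^ 2 →
      z ≤ -β + ⟪g, h⟫ + 1 / (2 * m) * ‖h‖ ^ 2 := by
  have hε : 0 < min m ((β - m * (1 + ‖g‖ ^ 2)) / (‖g‖ + 1)) :=
    lt_min hm (div_pos (by linarith) (by positivity))
  filter_upwards [ball_mem_nhds 0 hε] with h hh z hz hout
  rw [mem_ball_zero_iff, lt_min_iff, lt_div_iff₀ (by positivity)] at hh
  have hq := sq_paraboloid_le (β := β) hm (norm_nonneg h) hh.1.le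
    (abs_real_inner_le_norm g h) (by linarith [hh.2])
  have hexp : ‖β • g + h‖ ^ 2 = β ^ 2 * ‖g‖ ^ 2 + 2 * β * ⟪g, h⟫ + ‖h‖ ^ 2 := by
    rw [norm_add_sq_real, norm_smul, real_inner_smul_left, Real.norm_eq_abs, mul_pow, sq_abs]
    ring
  rcases le_or_gt 0 (-β + ⟪g, h⟫ + 1 / (2 * m) * ‖h‖ ^ 2) with hq0 | hq0
  · linarith
  · nlinarith

variable [CompleteSpace E] {f : E → ℝ} {x₀ c₁ : E} {c₂ r : ℝ}

theorem ConvexOn.lt_of_sphere_support (hconv : ConvexOn ℝ univ f)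
    (hdiff : DifferentiableAt ℝ f x₀) (hr : 0 < r)
    (hout : ∀ y, r ^ 2 ≤ ‖y - c₁‖ ^ 2 + (f y - c₂) ^ 2) (habove : f c₁ < c₂)
    (htan : x₀ - c₁ = (c₂ - f x₀) • gradient f x₀) :
    f x₀ < c₂ := by
  have hcenter : f c₁ ≤ c₂ - r := by
    have := hout c₁
    rw [sub_self, norm_zero] at this
    nlinarith
  have hsupp := hconv.add_inner_gradient_le (mem_univ x₀) (mem_univ c₁) hdiff
  rw [← neg_sub, htan, inner_neg_right, real_inner_smul_right,
    real_inner_self_eq_norm_sq] at hsupp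
  nlinarith [sq_nonneg ‖gradient f x₀‖]

theorem ConvexOn.eventually_le_paraboloid_of_sphere_support (hconv : ConvexOn ℝ univ f)
    (hdiff : DifferentiableAt ℝ f x₀) (hr : 0 < r)
    (hmem : ‖x₀ - c₁‖ ^ 2 + (f x₀ - c₂) ^ 2 = r ^ 2)
    (hout : ∀ y, r ^ 2 ≤ ‖y - c₁‖ ^ 2 + (f y - c₂) ^ 2) (habove : f c₁ < c₂)
    {m : ℝ} (hm : 0 < m) (hmr : m < r / (1 + ‖gradient f x₀‖ ^ 2) ^ ((3 : ℝ) / 2)) :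
    ∀ᶠ x in 𝓝 x₀, f x ≤ f x₀ + ⟪gradient f x₀, x - x₀⟫ + 1 / (2 * m) * ‖x - x₀‖ ^ 2 := by
  have htan : x₀ - c₁ = (c₂ - f x₀) • gradient f x₀ :=
    sub_eq_smul_gradient_of_isLocalMin hdiff
      (Eventually.of_forall fun y ↦ hmem.trans_le (hout y))
  have hβ : 0 < c₂ - f x₀ := sub_pos.mpr (hconv.lt_of_sphere_support hdiff hr hout habove htan)
  set g := gradient f x₀
  set β := c₂ - f x₀
  have hr2 : r ^ 2 = β ^ 2 * (1 + ‖g‖ ^ 2) := by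
    rw [← hmem, htan, norm_smul, Real.norm_eq_abs, mul_pow, sq_abs]
    ring
  rw [div_rpow_three_halves_eq hr.le hβ.le (by positivity) hr2, lt_div_iff₀ (by positivity)]
    at hmr
  have hshift : Tendsto (fun x ↦ x - x₀) (𝓝 x₀) (𝓝 0) := by
    simpa using (continuous_sub_right x₀).tendsto x₀
  filter_upwards [hshift.eventually (eventually_le_paraboloid_of_outside_sphere g hm hmr),
    hdiff.continuousAt.eventually_lt continuousAt_const (sub_pos.mp hβ)]
    with x hpar hbelow
  have hx : x - c₁ = β • g + (x - x₀) := by rw [← htan]; abel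
  have := hpar (f x - c₂) (by linarith) (by rw [← hx, ← hr2]; exact hout x)
  linarith

end

theorem Kfn_le_of_eventually_le {n : ℕ} {u : EuclideanSpace ℝ (Fin n) → ℝ}
    {x₀ : EuclideanSpace ℝ (Fin n)} {κ : ℝ}
    (hu : ∀ᶠ x in 𝓝 x₀, u x ≤ u x₀ + ⟪gradient u x₀, x - x₀⟫ + κ / 2 * ‖x - x₀‖ ^ 2) :
    Kfn u x₀ ≤ κ := by
  obtain ⟨ε₀, hε₀, hball⟩ := eventually_nhds_iff_ball.mp hu
  refine limsup_le_of_le (by isBoundedDefault) ?_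
  filter_upwards [nhdsWithin_le_nhds (ball_mem_nhds 0 hε₀), self_mem_nhdsWithin]
    with ε hε (hε0 : ε ≠ 0)
  refine sSup_le ?_
  rintro _ ⟨h, hh : ‖h‖ = 1, rfl⟩
  have := hball (x₀ + ε • h) (by
    rw [mem_ball, dist_eq_norm, add_sub_cancel_left, norm_smul, hh, mul_one]
    simpa using hε)
  rw [add_sub_cancel_left, real_inner_smul_right, norm_smul, hh, mul_one, Real.norm_eq_abs,
    sq_abs] at this
  rw [EReal.coe_le_coe_iff]
  calc 2 / ε ^ 2 * (u (x₀ + ε • h) - u x₀ - ε * ⟪gradient u x₀, h⟫)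
      ≤ 2 / ε ^ 2 * (κ / 2 * ε ^ 2) := by gcongr; linarith
    _ = κ := by field_simp

theorem stmt13 {n : ℕ} (f : EuclideanSpace ℝ (Fin n) → ℝ)
    (x₀ : EuclideanSpace ℝ (Fin n)) (hconv : ConvexOn ℝ Set.univ f)
    (hdiff : DifferentiableAt ℝ f x₀)
    (c : WithLp 2 (EuclideanSpace ℝ (Fin n) × ℝ)) (r : ℝ) (hr : 0 < r)
    (hmem : (WithLp.equiv 2 (EuclideanSpace ℝ (Fin n) × ℝ)).symm (x₀, f x₀) ∈ Metric.sphere c r)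
    (hdisj : ∀ y : EuclideanSpace ℝ (Fin n),
      (WithLp.equiv 2 (EuclideanSpace ℝ (Fin n) × ℝ)).symm (y, f y) ∉ Metric.ball c r)
    (habove : f ((WithLp.equiv 2 (EuclideanSpace ℝ (Fin n) × ℝ)) c).1 <
      ((WithLp.equiv 2 (EuclideanSpace ℝ (Fin n) × ℝ)) c).2) :
    (∀ m : ℝ, 0 < m → m < r / (1 + ‖gradient f x₀‖ ^ 2) ^ ((3 : ℝ) / 2) →
      ∃ ε > 0, ∀ x ∈ Metric.ball x₀ ε,
        f x ≤ f x₀ + ⟪gradient f x₀, x - x₀⟫ + 1 / (2 * m) * ‖x - x₀‖ ^ 2) ∧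
    Kfn f x₀ ≤ (((1 + ‖gradient f x₀‖ ^ 2) ^ ((3 : ℝ) / 2) / r : ℝ) : EReal) := by
  have hdist (y) : dist ((WithLp.equiv 2 _).symm (y, f y)) c ^ 2
      = ‖y - c.fst‖ ^ 2 + (f y - c.snd) ^ 2 := by
    rw [WithLp.prod_dist_sq_eq_of_L2, dist_eq_norm, Real.dist_eq, sq_abs]
    simp only [WithLp.equiv_symm_apply, WithLp.toLp_fst, WithLp.toLp_snd]
  have hmem' := (hdist x₀).symm.trans (by rw [mem_sphere.mp hmem])
  have hout (y) : r ^ 2 ≤ ‖y - c.fst‖ ^ 2 + (f y - c.snd) ^ 2 :=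
    hdist y ▸ pow_le_pow_left₀ hr.le (not_lt.mp (hdisj y)) 2
  have hpar (m : ℝ) (hm : 0 < m) (hmr) :=
    hconv.eventually_le_paraboloid_of_sphere_support hdiff hr hmem' hout habove hm hmr
  refine ⟨fun m hm hmr ↦ eventually_nhds_iff_ball.mp (hpar m hm hmr), ?_⟩
  refine EReal.le_of_forall_lt_iff_le.mp fun κ hκ ↦ Kfn_le_of_eventually_le ?_
  have hκ0 : 0 < κ := lt_trans (by positivity) (EReal.coe_lt_coe_iff.mp hκ)
  simpa [div_eq_mul_inv, mul_comm] using hpar κ⁻¹ (inv_pos.mpr hκ0)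
    (inv_lt_of_inv_lt₀ (by positivity) (by rwa [inv_div, ← EReal.coe_lt_coe_iff]))
end

section
/- There exists a convex function f : [−1,1] → ℝ, differentiable with f(0) = 0, f'(0) = 0, satisfying |f'(x)| ≤ |x| for all x (so the unit circle centered at (0,1) supports its graph from above at the origin, and K(f,0) < ∞), but such that f' is not Lipschitz on any neighborhood of 0. -/
/-!
On `x ≥ 0` the derivative is a sum of ramps: the `n`-th one starts at `2⁻ⁿ`, rises with slope
`n + 1` and saturates at height `2⁻ⁿ⁻¹ · 2⁻ⁿ`. Because the ramp is zero to the left of `2⁻ⁿ`, it is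
bounded by `2⁻ⁿ⁻¹ x` for every `x ≥ 0`, so the sum is at most `x`. The sum is continuous and
monotone, so its primitive is convex and `C¹`; the derivative is extended oddly. Every other ramp is
monotone, so across the rising part of the `n`-th ramp the derivative has slope at least `n + 1`,
and these rising parts accumulate at `0`.
-/

open Filter Metric Set
open scoped Topology

noncomputable section

theorem convexOn_integral_of_monotone {g : ℝ → ℝ} (hc : Continuous g) (hm : Monotone g) (a : ℝ) :
    ConvexOn ℝ univ (fun x => ∫ t in a..x, g t) :=
  Monotone.convexOn_univ_of_deriv
    (fun x => (hc.integral_hasStrictDerivAt a x).hasDerivAt.differentiableAt)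
    (by rwa [funext (hc.deriv_integral g a)])

theorem sub_le_tsum_sub_tsum {ι α : Type*} [Preorder α] {F : ι → α → ℝ} (hF : ∀ i, Monotone (F i))
    (hs : ∀ x, Summable (F · x)) {x y : α} (hxy : x ≤ y) (i : ι) :
    F i y - F i x ≤ ∑' k, F k y - ∑' k, F k x := by
  rw [← (hs y).tsum_sub (hs x)]
  exact ((hs y).sub (hs x)).le_tsum i fun k _ => sub_nonneg.mpr (hF k hxy)

def ramp (b c s x : ℝ) : ℝ := max 0 (min c (s * (x - b)))

section Ramp

variable {b c s x : ℝ}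

theorem ramp_nonneg : 0 ≤ ramp b c s x := le_max_left _ _

theorem ramp_le (hc : 0 ≤ c) : ramp b c s x ≤ c := max_le hc (min_le_left _ _)

theorem ramp_eq_zero (hs : 0 ≤ s) (hx : x ≤ b) : ramp b c s x = 0 :=
  max_eq_left <| (min_le_right _ _).trans (mul_nonpos_of_nonneg_of_nonpos hs (by linarith))

theorem ramp_add_div (hs : 0 < s) (hc : 0 ≤ c) : ramp b c s (b + c / s) = c := by
  rw [ramp, add_sub_cancel_left, mul_div_cancel₀ c hs.ne', min_self, max_eq_right hc]

theorem monotone_ramp (hs : 0 ≤ s) : Monotone (ramp b c s) := fun _ _ hxy =>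
  max_le_max le_rfl (min_le_min le_rfl (mul_le_mul_of_nonneg_left (by linarith) hs))

theorem continuous_ramp : Continuous (ramp b c s) := by
  unfold ramp; fun_prop

theorem ramp_le_mul {w : ℝ} (hs : 0 ≤ s) (hw : 0 ≤ w) (hcb : c ≤ w * b) (hx : 0 ≤ x) :
    ramp b c s x ≤ w * x := by
  rcases le_or_gt x b with hxb | hbx
  · rw [ramp_eq_zero hs hxb]; positivity
  · exact max_le (by positivity)
      ((min_le_left _ _).trans (hcb.trans (mul_le_mul_of_nonneg_left hbx.le hw)))

end Ramp

def stairStart (n : ℕ) : ℝ := (1 / 2) ^ n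

def stairHeight (n : ℕ) : ℝ := (1 / 2) ^ (n + 1) * stairStart n

def stairEnd (n : ℕ) : ℝ := stairStart n + stairHeight n / (n + 1)

def stairRamp (n : ℕ) : ℝ → ℝ := ramp (stairStart n) (stairHeight n) (n + 1)

def staircase (x : ℝ) : ℝ := ∑' n, stairRamp n x

def oddStaircase (x : ℝ) : ℝ := staircase x - staircase (-x)

theorem stairStart_pos (n : ℕ) : 0 < stairStart n := by unfold stairStart; positivity

theorem stairHeight_pos (n : ℕ) : 0 < stairHeight n := by
  have := stairStart_pos n; unfold stairHeight; positivity

theorem stairHeight_le_stairStart (n : ℕ) : stairHeight n ≤ stairStart n :=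
  mul_le_of_le_one_left (stairStart_pos n).le (pow_le_one₀ (by norm_num) (by norm_num))

theorem stairEnd_sub_stairStart (n : ℕ) : stairEnd n - stairStart n = stairHeight n / (n + 1) :=
  add_sub_cancel_left _ _

theorem stairStart_lt_stairEnd (n : ℕ) : stairStart n < stairEnd n := by
  have := stairHeight_pos n; unfold stairEnd; linarith [div_pos this n.cast_add_one_pos]

theorem stairEnd_le_two_mul (n : ℕ) : stairEnd n ≤ 2 * stairStart n := by
  have := div_le_self (stairHeight_pos n).le (by simp : (1 : ℝ) ≤ n + 1)
  have := stairHeight_le_stairStart n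
  unfold stairEnd; linarith

theorem norm_stairRamp_le (n : ℕ) (x : ℝ) : ‖stairRamp n x‖ ≤ (1 / 2) ^ n := by
  rw [stairRamp, Real.norm_of_nonneg ramp_nonneg]
  exact (ramp_le (stairHeight_pos n).le).trans (stairHeight_le_stairStart n)

theorem summable_stairRamp (x : ℝ) : Summable (stairRamp · x) :=
  summable_geometric_two.of_norm_bounded (norm_stairRamp_le · x)

theorem monotone_stairRamp (n : ℕ) : Monotone (stairRamp n) := monotone_ramp n.cast_add_one_pos.le

theorem continuous_staircase : Continuous staircase :=
  continuous_tsum (fun _ => continuous_ramp) summable_geometric_two norm_stairRamp_le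

theorem monotone_staircase : Monotone staircase := fun x y hxy =>
  Summable.tsum_le_tsum (fun n => monotone_stairRamp n hxy) (summable_stairRamp x)
    (summable_stairRamp y)

theorem staircase_nonneg (x : ℝ) : 0 ≤ staircase x := tsum_nonneg fun _ => ramp_nonneg

theorem staircase_eq_zero {x : ℝ} (hx : x ≤ 0) : staircase x = 0 := by
  have h (n : ℕ) : stairRamp n x = 0 :=
    ramp_eq_zero n.cast_add_one_pos.le (hx.trans (stairStart_pos n).le)
  simp [staircase, h]

theorem staircase_le {x : ℝ} (hx : 0 ≤ x) : staircase x ≤ x := by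
  have hw : Summable fun n : ℕ => (1 / 2 : ℝ) ^ (n + 1) :=
    (summable_nat_add_iff 1).mpr summable_geometric_two
  have hsum : ∑' n : ℕ, (1 / 2 : ℝ) ^ (n + 1) = 1 := by
    simp_rw [pow_succ]; rw [tsum_mul_right, tsum_geometric_two]; norm_num
  calc staircase x ≤ ∑' n : ℕ, (1 / 2 : ℝ) ^ (n + 1) * x :=
        Summable.tsum_le_tsum
          (fun n => ramp_le_mul n.cast_add_one_pos.le (by positivity) le_rfl hx)
          (summable_stairRamp x) (hw.mul_right x)
    _ = x := by rw [tsum_mul_right, hsum, one_mul]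

theorem staircase_steep (n : ℕ) :
    (n + 1) * (stairEnd n - stairStart n) ≤ staircase (stairEnd n) - staircase (stairStart n) := by
  have hs : (0 : ℝ) < n + 1 := n.cast_add_one_pos
  have hend : stairRamp n (stairEnd n) = stairHeight n := ramp_add_div hs (stairHeight_pos n).le
  have hstart : stairRamp n (stairStart n) = 0 := ramp_eq_zero hs.le le_rfl
  have := sub_le_tsum_sub_tsum monotone_stairRamp summable_stairRamp
    (stairStart_lt_stairEnd n).le n
  rw [hend, hstart, sub_zero] at this
  rwa [stairEnd_sub_stairStart, mul_div_cancel₀ _ hs.ne']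

theorem oddStaircase_of_nonneg {x : ℝ} (hx : 0 ≤ x) : oddStaircase x = staircase x := by
  rw [oddStaircase, staircase_eq_zero (neg_nonpos.mpr hx), sub_zero]

theorem continuous_oddStaircase : Continuous oddStaircase :=
  continuous_staircase.sub (continuous_staircase.comp continuous_neg)

theorem monotone_oddStaircase : Monotone oddStaircase := fun _ _ hxy =>
  sub_le_sub (monotone_staircase hxy) (monotone_staircase (neg_le_neg hxy))

theorem oddStaircase_zero : oddStaircase 0 = 0 := by simp [oddStaircase]

theorem abs_oddStaircase_le (x : ℝ) : |oddStaircase x| ≤ |x| := by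
  rcases le_total 0 x with hx | hx
  · rw [oddStaircase_of_nonneg hx, abs_of_nonneg (staircase_nonneg x), abs_of_nonneg hx]
    exact staircase_le hx
  · rw [oddStaircase, staircase_eq_zero hx, zero_sub, abs_neg,
      abs_of_nonneg (staircase_nonneg _), abs_of_nonpos hx]
    exact staircase_le (neg_nonneg.mpr hx)

theorem not_lipschitzOnWith_oddStaircase {ε : ℝ} (hε : 0 < ε) (L : NNReal) :
    ¬ LipschitzOnWith L oddStaircase (Icc (-1) 1 ∩ ball 0 ε) := by
  intro hL
  have hsteep : ∀ᶠ n : ℕ in atTop, (L : ℝ) < n + 1 :=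
    (tendsto_natCast_atTop_atTop.eventually_gt_atTop (L : ℝ)).mono fun n hn => by linarith
  have hsmall : ∀ᶠ n : ℕ in atTop, 2 * stairStart n < min ε 1 := by
    have := (tendsto_pow_atTop_nhds_zero_of_lt_one (by norm_num) (by norm_num :
      (1 / 2 : ℝ) < 1)).const_mul 2
    rw [mul_zero] at this
    exact this.eventually_lt_const (lt_min hε one_pos)
  obtain ⟨n, hn, hclose⟩ := (hsteep.and hsmall).exists
  have hpos := stairStart_pos n
  have hlt := stairStart_lt_stairEnd n
  have hle := stairEnd_le_two_mul n
  have hmem {x : ℝ} (h0 : 0 ≤ x) (h2 : x ≤ 2 * stairStart n) : x ∈ Icc (-1) 1 ∩ ball 0 ε := by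
    have := lt_of_le_of_lt h2 hclose
    refine ⟨⟨by linarith, by linarith [min_le_right ε 1]⟩, ?_⟩
    rw [mem_ball, Real.dist_0_eq_abs, abs_of_nonneg h0]
    linarith [min_le_left ε 1]
  have hlip := hL.dist_le_mul _ (hmem (by linarith) hle) _ (hmem hpos.le (by linarith))
  rw [Real.dist_eq, Real.dist_eq, abs_of_pos (sub_pos.mpr hlt),
    oddStaircase_of_nonneg (by linarith), oddStaircase_of_nonneg hpos.le] at hlip
  exact (mul_lt_mul_of_pos_right hn (sub_pos.mpr hlt)).not_ge
    ((staircase_steep n).trans ((le_abs_self _).trans hlip))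

theorem stmt15 :
    ∃ f : ℝ → ℝ,
      ConvexOn ℝ (Set.Icc (-1 : ℝ) 1) f ∧
      (∀ x ∈ Set.Icc (-1 : ℝ) 1, DifferentiableAt ℝ f x) ∧
      f 0 = 0 ∧ deriv f 0 = 0 ∧
      (∀ x ∈ Set.Icc (-1 : ℝ) 1, |deriv f x| ≤ |x|) ∧
      (∀ ε > (0 : ℝ), ∀ L : NNReal,
        ¬ LipschitzOnWith L (deriv f) (Set.Icc (-1 : ℝ) 1 ∩ Metric.ball 0 ε)) := by
  have hderiv := continuous_oddStaircase.deriv_integral oddStaircase 0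
  refine ⟨fun x => ∫ t in (0 : ℝ)..x, oddStaircase t,
    (convexOn_integral_of_monotone continuous_oddStaircase monotone_oddStaircase 0).subset
      (subset_univ _) (convex_Icc _ _),
    fun x _ => (continuous_oddStaircase.integral_hasStrictDerivAt 0 x).hasDerivAt.differentiableAt,
    intervalIntegral.integral_same, ?_, fun x _ => ?_, fun ε hε L => ?_⟩
  · rw [hderiv, oddStaircase_zero]
  · rw [hderiv]; exact abs_oddStaircase_le x
  · rw [funext hderiv]; exact not_lipschitzOnWith_oddStaircase hε L
end
end

section
/- With f constructed as follows: f' (x≥0) = ∫₀ˣ γ(t) dt where γ(t) = n+4 for t ∈ I_n = (n+4)⁻²[1−(n+4)⁻², 1] and γ = 0 otherwise, one has f'(x) ≤ x for all x ∈ [0,1]; in particular f'(1/(n+4)²) = Σ_{k≥n} 1/(k+4)³ ≤ 1/(2(n+3)²) < 1/(n+4)². -/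
/-!
The `n`-th bump `(n + 4) • 𝟙_{I n}` has width `(n + 4)⁻⁴`, so it carries mass `(n + 4)⁻³`, and the
intervals `I n` are disjoint and decrease to `0`. Hence `∫₀ˣ γ` is the total mass of the bumps to
the left of `x`; at the right endpoint `(n + 4)⁻²` of `I n` this is the tail
`∑_{k ≥ n} (k + 4)⁻³ ≤ 1 / (2 (n + 3)²)`, by telescoping against `1 / (2 c²)`. Since `γ ≥ 1` on
the intervals and `γ = 0` between them, `∫₀ˣ γ - x` is largest at those right endpoints, where it
is negative because `1 / (2 (n + 3)²) < (n + 4)⁻²`.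
-/

open Set intervalIntegral MeasureTheory
open scoped Classical

theorem integral_tsum_indicator_const {α ι E : Type*} [MeasurableSpace α] [Countable ι]
    [NormedAddCommGroup E] [NormedSpace ℝ E] [CompleteSpace E] {μ : Measure α}
    {S : ι → Set α} {w : ι → E} (hS : ∀ i, MeasurableSet (S i)) (hfin : ∀ i, μ (S i) ≠ ⊤)
    (hw : Summable fun i => μ.real (S i) * ‖w i‖) :
    ∫ t, ∑' i, (S i).indicator (fun _ => w i) t ∂μ = ∑' i, μ.real (S i) • w i := by
  have hint : ∀ i, Integrable ((S i).indicator fun _ => w i) μ := fun i =>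
    (integrable_indicator_iff (hS i)).2 (integrableOn_const (hfin i))
  have hnorm : ∀ i, ∫ t, ‖(S i).indicator (fun _ => w i) t‖ ∂μ = μ.real (S i) * ‖w i‖ := by
    intro i
    simp_rw [norm_indicator_eq_indicator_norm]
    rw [integral_indicator_const _ (hS i), smul_eq_mul]
  rw [← integral_tsum_of_summable_integral_norm hint (by simpa only [hnorm] using hw)]
  exact tsum_congr fun i => integral_indicator_const _ (hS i)

lemma one_div_pow_three_le_sub {c : ℝ} (hc : 1 < c) :
    1 / c ^ 3 ≤ 1 / (2 * (c - 1) ^ 2) - 1 / (2 * c ^ 2) := by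
  have h0 : 0 < c := by linarith
  have h1 : 0 < 2 * (c - 1) ^ 2 := mul_pos two_pos (pow_pos (by linarith) 2)
  rw [div_sub_div _ _ h1.ne' (by positivity),
    div_le_div_iff₀ (by positivity) (mul_pos h1 (by positivity))]
  nlinarith [pow_pos (by linarith : 0 < c - 1) 2, pow_pos h0 3]

lemma sum_range_one_div_pow_three_le {s : ℝ} (hs : 0 < s) (K : ℕ) :
    ∑ k ∈ Finset.range K, 1 / (s + k + 1) ^ 3 ≤ 1 / (2 * s ^ 2) - 1 / (2 * (s + K) ^ 2) := by
  induction K with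
  | zero => simp
  | succ K ih =>
    have h := one_div_pow_three_le_sub (c := s + K + 1) (by linarith [K.cast_nonneg (α := ℝ)])
    rw [add_sub_cancel_right] at h
    rw [Finset.sum_range_succ, Nat.cast_succ, ← add_assoc]
    linarith

lemma summable_one_div_pow_three {s : ℝ} (hs : 0 < s) :
    Summable fun k : ℕ => 1 / (s + k + 1) ^ 3 :=
  summable_of_sum_range_le (fun _ => by positivity) fun K =>
    (sum_range_one_div_pow_three_le hs K).trans (sub_le_self _ (by positivity))

lemma tsum_one_div_pow_three_le {s : ℝ} (hs : 0 < s) :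
    ∑' k : ℕ, 1 / (s + k + 1) ^ 3 ≤ 1 / (2 * s ^ 2) :=
  Real.tsum_le_of_sum_range_le (fun _ => by positivity) fun K =>
    (sum_range_one_div_pow_three_le hs K).trans (sub_le_self _ (by positivity))

lemma exists_mem_Icc_succ_of_lt {α : Type*} [LinearOrder α] {u : ℕ → α} {x : α} (h0 : x < u 0)
    {n : ℕ} (hn : u n ≤ x) : ∃ N, x ∈ Icc (u (N + 1)) (u N) := by
  by_contra! H
  simp only [mem_Icc, not_and, not_le] at H
  have : ∀ n, u n ≤ x → u 0 ≤ x := by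
    intro n
    induction n with
    | zero => exact id
    | succ k ih => exact fun h => ih (H k h).le
  exact (this n hn).not_gt h0

namespace Bumps

noncomputable def left (n : ℕ) : ℝ := (1 - 1 / ((n : ℝ) + 4) ^ 2) / ((n : ℝ) + 4) ^ 2

noncomputable def right (n : ℕ) : ℝ := 1 / ((n : ℝ) + 4) ^ 2

noncomputable def tail (n : ℕ) : ℝ := ∑' k : ℕ, 1 / ((n : ℝ) + (k : ℝ) + 4) ^ 3

/-- The integral over `[0, x]` of the `n`-th bump `(n + 4) • 𝟙_[left n, right n]`. -/
noncomputable def mass (n : ℕ) (x : ℝ) : ℝ := ((n : ℝ) + 4) * max (min (right n) x - left n) 0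

lemma right_nonneg (n : ℕ) : 0 ≤ right n := by
  unfold right; positivity

lemma right_sub_left (n : ℕ) : right n - left n = 1 / ((n : ℝ) + 4) ^ 4 := by
  unfold left right
  field_simp
  ring

lemma right_antitone : Antitone right := fun n m h => by
  unfold right
  gcongr

lemma right_succ_le_left (n : ℕ) : right (n + 1) ≤ left n := by
  have h4 : (4 : ℝ) ≤ (n : ℝ) + 4 := by simp
  have hl : left n = (((n : ℝ) + 4) ^ 2 - 1) / ((n : ℝ) + 4) ^ 4 := by unfold left; field_simp
  rw [hl, right, div_le_div_iff₀ (by positivity) (by positivity)]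
  push_cast
  nlinarith [pow_pos (by linarith : (0 : ℝ) < (n : ℝ) + 4) 3]

lemma left_nonneg (n : ℕ) : 0 ≤ left n :=
  (right_nonneg _).trans (right_succ_le_left n)

lemma mass_nonneg (n : ℕ) (x : ℝ) : 0 ≤ mass n x := by
  unfold mass; positivity

lemma mass_le (n : ℕ) (x : ℝ) : mass n x ≤ 1 / ((n : ℝ) + 4) ^ 3 := by
  have h : max (min (right n) x - left n) 0 ≤ 1 / ((n : ℝ) + 4) ^ 4 :=
    max_le (by linarith [min_le_left (right n) x, right_sub_left n]) (by positivity)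
  calc mass n x ≤ ((n : ℝ) + 4) * (1 / ((n : ℝ) + 4) ^ 4) := by unfold mass; gcongr
    _ = 1 / ((n : ℝ) + 4) ^ 3 := by field_simp

lemma mass_of_le_left {n : ℕ} {x : ℝ} (hx : x ≤ left n) : mass n x = 0 := by
  unfold mass
  rw [max_eq_right (by linarith [min_le_right (right n) x]), mul_zero]

lemma mass_of_right_le {n : ℕ} {x : ℝ} (hx : right n ≤ x) : mass n x = 1 / ((n : ℝ) + 4) ^ 3 := by
  unfold mass
  rw [min_eq_left hx, right_sub_left, max_eq_left (by positivity)]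
  field_simp

lemma mass_of_mem_Icc {n : ℕ} {x : ℝ} (hx : x ∈ Icc (left n) (right n)) :
    mass n x = 1 / ((n : ℝ) + 4) ^ 3 - ((n : ℝ) + 4) * (right n - x) := by
  unfold mass
  rw [min_eq_right hx.2, max_eq_left (sub_nonneg.2 hx.1),
    show x - left n = 1 / ((n : ℝ) + 4) ^ 4 - (right n - x) by linarith [right_sub_left n]]
  field_simp

lemma summable_mass (x : ℝ) : Summable fun n => mass n x := by
  refine Summable.of_nonneg_of_le (mass_nonneg · x) (mass_le · x) ?_
  exact (summable_one_div_pow_three (s := 3) three_pos).congr fun k => by ring_nf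

lemma summable_tail_term (n : ℕ) : Summable fun k : ℕ => 1 / ((n : ℝ) + (k : ℝ) + 4) ^ 3 :=
  (summable_one_div_pow_three (s := (n : ℝ) + 3) (by positivity)).congr fun k => by ring_nf

lemma tail_eq_add (n : ℕ) : tail n = 1 / ((n : ℝ) + 4) ^ 3 + tail (n + 1) := by
  unfold tail
  rw [(summable_tail_term n).tsum_eq_zero_add, Nat.cast_zero, add_zero]
  congr 1
  exact tsum_congr fun k => by push_cast; ring_nf

lemma tail_le (n : ℕ) : tail n ≤ 1 / (2 * ((n : ℝ) + 3) ^ 2) :=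
  calc tail n = ∑' k : ℕ, 1 / ((n : ℝ) + 3 + k + 1) ^ 3 := tsum_congr fun k => by ring_nf
    _ ≤ _ := tsum_one_div_pow_three_le (by positivity)

lemma one_div_two_mul_sq_lt (n : ℕ) : 1 / (2 * ((n : ℝ) + 3) ^ 2) < 1 / ((n : ℝ) + 4) ^ 2 := by
  rw [div_lt_div_iff₀ (by positivity) (by positivity)]
  nlinarith [n.cast_nonneg (α := ℝ)]

lemma tail_lt_right (n : ℕ) : tail n < right n :=
  (tail_le n).trans_lt (one_div_two_mul_sq_lt n)

lemma exists_right_le {x : ℝ} (hx : 0 < x) : ∃ n, right n ≤ x := by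
  obtain ⟨n, hn⟩ := exists_nat_one_div_lt hx
  refine ⟨n, le_trans ?_ hn.le⟩
  unfold right
  gcongr
  nlinarith [n.cast_nonneg (α := ℝ)]

lemma integral_eq_tsum_mass {I : ℕ → Set ℝ} (hI : ∀ n, I n = Icc (left n) (right n)) {γ : ℝ → ℝ}
    (hγ : ∀ t, γ t = ∑' n : ℕ, if t ∈ I n then ((n : ℝ) + 4) else 0) {x : ℝ} (hx : 0 ≤ x) :
    ∫ t in (0 : ℝ)..x, γ t = ∑' n, mass n x := by
  have hvol : ∀ n, (volume.restrict (Icc 0 x)).real (I n) = max (min (right n) x - left n) 0 := by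
    intro n
    rw [hI, measureReal_restrict_apply measurableSet_Icc, Icc_inter_Icc, Real.volume_real_Icc,
      sup_of_le_left (left_nonneg n)]
  have hsum := integral_tsum_indicator_const (μ := volume.restrict (Icc 0 x))
    (w := fun n : ℕ => (n : ℝ) + 4) (fun n => hI n ▸ measurableSet_Icc) (fun n => measure_ne_top _ _)
  simp only [hvol, smul_eq_mul] at hsum
  rw [integral_of_le hx, ← integral_Icc_eq_integral_Ioc]
  simp only [hγ]
  refine (hsum ((summable_mass x).congr fun n => ?_)).trans (tsum_congr fun n => mul_comm _ _)
  rw [Real.norm_of_nonneg (by positivity), mass, mul_comm]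

lemma tsum_mass_of_mem_Icc {N : ℕ} {x : ℝ} (hx : x ∈ Icc (right (N + 1)) (right N)) :
    ∑' n, mass n x = mass N x + tail (N + 1) := by
  rw [← (summable_mass x).sum_add_tsum_nat_add (N + 1), Finset.sum_range_succ,
    Finset.sum_eq_zero fun n hn => mass_of_le_left ?_, zero_add]
  · exact congrArg _ (tsum_congr fun k => by
      rw [mass_of_right_le ((right_antitone (by omega)).trans hx.1)]
      push_cast; ring_nf)
  · have hn : n + 1 ≤ N := Finset.mem_range.1 hn
    exact hx.2.trans ((right_antitone hn).trans (right_succ_le_left n))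

lemma tsum_mass_right (N : ℕ) : ∑' n, mass n (right N) = tail N := by
  rw [tsum_mass_of_mem_Icc ⟨right_antitone N.le_succ, le_rfl⟩, mass_of_right_le le_rfl,
    tail_eq_add N]

lemma tsum_mass_le_tail_zero (x : ℝ) : ∑' n, mass n x ≤ tail 0 :=
  (summable_mass x).tsum_le_tsum (fun n => (mass_le n x).trans_eq (by simp))
    (summable_tail_term 0)

lemma tsum_mass_le_self {x : ℝ} (hx : 0 ≤ x) : ∑' n, mass n x ≤ x := by
  rcases hx.eq_or_lt with rfl | hx
  · simp [mass_of_le_left (left_nonneg _)]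
  rcases lt_or_ge x (right 0) with h0 | h0
  · obtain ⟨n, hn⟩ := exists_right_le hx
    obtain ⟨N, hN⟩ := exists_mem_Icc_succ_of_lt h0 hn
    rw [tsum_mass_of_mem_Icc hN]
    rcases le_total x (left N) with hl | hl
    · rw [mass_of_le_left hl, zero_add]
      exact (tail_lt_right _).le.trans hN.1
    · have hmass := mass_of_mem_Icc ⟨hl, hN.2⟩
      have hslope : right N - x ≤ ((N : ℝ) + 4) * (right N - x) :=
        le_mul_of_one_le_left (sub_nonneg.2 hN.2) (by linarith [N.cast_nonneg (α := ℝ)])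
      linarith [tail_eq_add N, tail_lt_right N]
  · exact (tsum_mass_le_tail_zero x).trans ((tail_lt_right 0).le.trans h0)

end Bumps

open Bumps in
theorem stmt16
    (I : ℕ → Set ℝ)
    (hI : ∀ n : ℕ, I n = Set.Icc ((1 - 1 / ((n : ℝ) + 4) ^ 2) / ((n : ℝ) + 4) ^ 2)
      (1 / ((n : ℝ) + 4) ^ 2))
    (γ : ℝ → ℝ)
    (hγ : ∀ t : ℝ, γ t = ∑' n : ℕ, if t ∈ I n then ((n : ℝ) + 4) else 0) :
    (∀ x ∈ Set.Icc (0 : ℝ) 1, (∫ t in (0 : ℝ)..x, γ t) ≤ x) ∧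
    (∀ n : ℕ, (∫ t in (0 : ℝ)..(1 / ((n : ℝ) + 4) ^ 2), γ t) =
      ∑' k : ℕ, 1 / ((n : ℝ) + (k : ℝ) + 4) ^ 3) ∧
    (∀ n : ℕ, (∑' k : ℕ, 1 / ((n : ℝ) + (k : ℝ) + 4) ^ 3) ≤ 1 / (2 * ((n : ℝ) + 3) ^ 2)) ∧
    (∀ n : ℕ, 1 / (2 * ((n : ℝ) + 3) ^ 2) < 1 / ((n : ℝ) + 4) ^ 2) := by
  refine ⟨fun x hx => ?_, fun n => ?_, tail_le, one_div_two_mul_sq_lt⟩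
  · rw [integral_eq_tsum_mass hI hγ hx.1]
    exact tsum_mass_le_self hx.1
  · exact (integral_eq_tsum_mass hI hγ (right_nonneg n)).trans (tsum_mass_right n)
end
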